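/- The function A(x) = ∫_0^x (1/(1+t²)) log(4/(1+t²)) dt is well-defined for all real x, is odd, and agrees with A₁(x) where A_m(x) = (2^{2m-1}/(2m-1)!) ∫_0^∞ t^{2m-1} / (x sinh²t + x^{-1} cosh²t) dt for m = 1 and x > 0. -/

import Mathlib

/-!
The substitution `u = tanh t` turns `A₁(x)` into `L(x) = ∫₀¹ artanh u · 2x / (1 + x²u²) du`,
which is visibly odd in `x`. Differentiating under the integral sign and then integrating by parts
in `u` gives `L'(x) = log (4 / (1 + x²)) / (1 + x²)`, the integrand of `A`; as `L(0) = 0 = A(0)`,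
`A = L` on all of `ℝ`.
-/

open MeasureTheory

/-- Zagier's function `A(x) = ∫_0^x (1/(1+t²)) log(4/(1+t²)) dt`. -/
noncomputable def zagierA (x : ℝ) : ℝ :=
  ∫ t in (0 : ℝ)..x, (1 / (1 + t ^ 2)) * Real.log (4 / (1 + t ^ 2))

/-- Zagier's function `A_m(x)` (here for `m = 1`):
`A₁(x) = 2 ∫_0^∞ t/(x sinh²t + x⁻¹ cosh²t) dt`. -/
noncomputable def zagierA1 (x : ℝ) : ℝ :=
  (2 ^ (2 * 1 - 1) / (Nat.factorial (2 * 1 - 1) : ℝ)) *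
    ∫ t in Set.Ioi (0 : ℝ), t ^ (2 * 1 - 1) / (x * Real.sinh t ^ 2 + x⁻¹ * Real.cosh t ^ 2)

open Real Set Filter

theorem hasDerivAt_tanh (t : ℝ) : HasDerivAt tanh (cosh t ^ 2)⁻¹ t := by
  have h := (hasDerivAt_sinh t).div (hasDerivAt_cosh t) (cosh_pos t).ne'
  rw [show tanh = fun y => sinh y / cosh y from funext tanh_eq_sinh_div_cosh]
  refine h.congr_deriv ?_
  rw [← one_div, ← cosh_sq_sub_sinh_sq t]; ring

theorem tanh_image_Ioi_zero : tanh '' Ioi 0 = Ioo 0 1 := by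
  ext u
  constructor
  · rintro ⟨t, ht, rfl⟩
    refine ⟨?_, tanh_lt_one t⟩
    rw [tanh_eq_sinh_div_cosh]
    exact div_pos (sinh_pos_iff.2 ht) (cosh_pos t)
  · intro hu
    exact ⟨artanh u, artanh_pos hu, tanh_artanh ⟨by linarith [hu.1], hu.2⟩⟩

theorem integral_Ioo_zero_one_eq_integral_Ioi_tanh (g : ℝ → ℝ) :
    ∫ u in Ioo 0 1, g u = ∫ t in Ioi 0, g (tanh t) / cosh t ^ 2 := by
  rw [← tanh_image_Ioi_zero, integral_image_eq_integral_abs_deriv_smul measurableSet_Ioi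
    (fun t _ => (hasDerivAt_tanh t).hasDerivWithinAt) tanh_injective.injOn]
  refine setIntegral_congr_fun measurableSet_Ioi fun t _ => ?_
  rw [smul_eq_mul, abs_of_pos (by positivity), inv_mul_eq_div]

theorem intervalIntegrable_artanh : IntervalIntegrable artanh volume 0 1 := by
  refine intervalIntegral.intervalIntegrable_deriv_of_nonneg
    (g := fun u => ((1 + u) * log (1 + u) + (1 - u) * log (1 - u)) / 2) ?_ ?_ ?_
  · exact (((continuous_const.add continuous_id).mul_log).add
      ((continuous_const.sub continuous_id).mul_log)).div_const 2 |>.continuousOn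
  · intro u hu
    simp only [zero_le_one, min_eq_left, max_eq_right] at hu
    have h₁ : 1 + u ≠ 0 := by linarith [hu.1]
    have h₂ : 1 - u ≠ 0 := by linarith [hu.2]
    have hp := (hasDerivAt_mul_log h₁).comp u ((hasDerivAt_id u).const_add 1)
    have hm := (hasDerivAt_mul_log h₂).comp u ((hasDerivAt_id u).const_sub 1)
    refine ((hp.add hm).div_const 2).congr_deriv ?_
    rw [artanh_eq_half_log ⟨by linarith [hu.1], hu.2.le⟩, log_div h₁ h₂]
    ring
  · exact fun u hu => artanh_nonneg (by simpa using hu.1.le)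


theorem hasDerivAt_two_mul_div_one_add_sq_mul_sq (u x : ℝ) :
    HasDerivAt (fun x => 2 * x / (1 + x ^ 2 * u ^ 2))
      (2 * (1 - x ^ 2 * u ^ 2) / (1 + x ^ 2 * u ^ 2) ^ 2) x := by
  have hd : HasDerivAt (fun x => 1 + x ^ 2 * u ^ 2) (2 * x * u ^ 2) x := by
    simpa using ((hasDerivAt_pow 2 x).mul_const (u ^ 2)).const_add 1
  refine (((hasDerivAt_id' x).const_mul 2).div hd (by positivity)).congr_deriv ?_
  field_simp
  ring

theorem abs_two_mul_one_sub_div_one_add_sq_le {s : ℝ} (hs : 0 ≤ s) :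
    |2 * (1 - s) / (1 + s) ^ 2| ≤ 2 := by
  have h : 0 < (1 + s) ^ 2 := by positivity
  rw [abs_le, le_div_iff₀ h, div_le_iff₀ h]
  constructor <;> nlinarith

/-- A primitive of `u ↦ artanh u * 2 (1 - x²u²) / (1 + x²u²)²` on `(0, 1)`, from integrating by
parts against `2u / (1 + x²u²) - 2 / (1 + x²)`. That factor vanishes at `u = 1`, which turns the
singular `artanh u` into the continuous `(1 - u) log (1 - u)`. -/
noncomputable def zagierPrimitive (x u : ℝ) : ℝ :=
  ((1 - u) * log (1 - u) - (1 - u) * log (1 + u)) * (1 - x ^ 2 * u) /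
      ((1 + x ^ 2) * (1 + x ^ 2 * u ^ 2)) +
    (2 * log (1 + u) - log (1 + x ^ 2 * u ^ 2)) / (1 + x ^ 2)

theorem continuousOn_zagierPrimitive (x : ℝ) : ContinuousOn (zagierPrimitive x) (Icc 0 1) := by
  have hml : Continuous fun u : ℝ => (1 - u) * log (1 - u) :=
    (continuous_const.sub continuous_id).mul_log
  have hlog : ContinuousOn (fun u : ℝ => log (1 + u)) (Icc 0 1) :=
    ContinuousOn.log (by fun_prop) fun u hu => by linarith [hu.1]
  have hq : ∀ u : ℝ, 1 + x ^ 2 * u ^ 2 ≠ 0 := fun u => by positivity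
  refine ContinuousOn.add ?_ ?_
  · refine ContinuousOn.div ?_ (by fun_prop) fun u _ => mul_ne_zero (by positivity) (hq u)
    exact ((hml.continuousOn.sub ((continuous_const.sub continuous_id).continuousOn.mul hlog)).mul
      (by fun_prop))
  · exact ((continuousOn_const.mul hlog).sub
      (ContinuousOn.log (by fun_prop) fun u _ => hq u)).div_const _

theorem hasDerivAt_zagierPrimitive (x : ℝ) {u : ℝ} (hu : u ∈ Ioo 0 1) :
    HasDerivAt (zagierPrimitive x)
      (artanh u * (2 * (1 - x ^ 2 * u ^ 2) / (1 + x ^ 2 * u ^ 2) ^ 2)) u := by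
  obtain ⟨h₀, h₁⟩ := hu
  have hp : 1 + u ≠ 0 := by linarith
  have hm : 1 - u ≠ 0 := by linarith
  have hq : 1 + x ^ 2 * u ^ 2 ≠ 0 := by positivity
  have hx : 1 + x ^ 2 ≠ 0 := by positivity
  have dp : HasDerivAt (fun v => 1 + v) 1 u := (hasDerivAt_id' u).const_add 1
  have dm : HasDerivAt (fun v => 1 - v) (-1) u := by
    simpa using (hasDerivAt_id' u).const_sub 1
  have dq : HasDerivAt (fun v => 1 + x ^ 2 * v ^ 2) (x ^ 2 * (2 * u)) u := by
    simpa using ((hasDerivAt_pow 2 u).const_mul (x ^ 2)).const_add 1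
  have dl : HasDerivAt (fun v => 1 - x ^ 2 * v) (-x ^ 2) u := by
    simpa using ((hasDerivAt_id' u).const_mul (x ^ 2)).const_sub 1
  have dP := (dm.fun_mul (dm.log hm)).fun_sub (dm.fun_mul (dp.log hp))
  have dR := (((dp.log hp).const_mul 2).fun_sub (dq.log hq)).div_const (1 + x ^ 2)
  have h := ((dP.fun_mul dl).fun_div (dq.const_mul (1 + x ^ 2)) (mul_ne_zero hx hq)).fun_add dR
  refine h.congr_deriv ?_
  rw [artanh_eq_half_log ⟨by linarith, h₁.le⟩, log_div hp hm]
  field_simp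
  ring

theorem integral_artanh_mul_two_mul_one_sub_div_sq (x : ℝ) :
    ∫ u in (0:ℝ)..1, artanh u * (2 * (1 - x ^ 2 * u ^ 2) / (1 + x ^ 2 * u ^ 2) ^ 2) =
      1 / (1 + x ^ 2) * log (4 / (1 + x ^ 2)) := by
  rw [intervalIntegral.integral_eq_sub_of_hasDerivAt_of_le zero_le_one
    (continuousOn_zagierPrimitive x) (fun u hu => hasDerivAt_zagierPrimitive x hu)
    (intervalIntegrable_artanh.mul_continuousOn (by fun_prop (disch := intro u _; positivity)))]
  rw [log_div (by norm_num) (by positivity), show (4 : ℝ) = 2 ^ 2 by norm_num, log_pow]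
  norm_num [zagierPrimitive]
  ring

/-- `A₁` after the substitution `u = tanh t`. -/
noncomputable def zagierA1Artanh (x : ℝ) : ℝ :=
  ∫ u in (0:ℝ)..1, artanh u * (2 * x / (1 + x ^ 2 * u ^ 2))

theorem zagierA1Artanh_neg (x : ℝ) : zagierA1Artanh (-x) = -zagierA1Artanh x := by
  simp [zagierA1Artanh, neg_div, intervalIntegral.integral_neg]

theorem hasDerivAt_zagierA1Artanh (x : ℝ) :
    HasDerivAt zagierA1Artanh (1 / (1 + x ^ 2) * log (4 / (1 + x ^ 2))) x := by
  have hF : ∀ y : ℝ,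
      IntervalIntegrable (fun u => artanh u * (2 * y / (1 + y ^ 2 * u ^ 2))) volume 0 1 :=
    fun y => intervalIntegrable_artanh.mul_continuousOn
      (by fun_prop (disch := intro u _; positivity))
  have hF' : IntervalIntegrable
      (fun u => artanh u * (2 * (1 - x ^ 2 * u ^ 2) / (1 + x ^ 2 * u ^ 2) ^ 2)) volume 0 1 :=
    intervalIntegrable_artanh.mul_continuousOn
      (by fun_prop (disch := intro u _; positivity))
  have h := (intervalIntegral.hasDerivAt_integral_of_dominated_loc_of_deriv_le
    (bound := fun u => ‖artanh u‖ * 2) univ_mem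
    (Eventually.of_forall fun y => (hF y).def'.aestronglyMeasurable) (hF x)
    hF'.def'.aestronglyMeasurable
    (ae_of_all _ fun u _ y _ => ?_) (intervalIntegrable_artanh.norm.mul_const 2)
    (ae_of_all _ fun u _ y _ => (hasDerivAt_two_mul_div_one_add_sq_mul_sq u y).const_mul _)).2
  · rwa [integral_artanh_mul_two_mul_one_sub_div_sq] at h
  · rw [norm_mul]
    exact mul_le_mul_of_nonneg_left (abs_two_mul_one_sub_div_one_add_sq_le (by positivity))
      (norm_nonneg _)

theorem continuous_one_div_one_add_sq_mul_log :
    Continuous fun t : ℝ => 1 / (1 + t ^ 2) * log (4 / (1 + t ^ 2)) := by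
  have h : ∀ t : ℝ, 1 + t ^ 2 ≠ 0 := fun t => by positivity
  fun_prop (disch := first | exact h | intro t; positivity)

theorem zagierA_eq_zagierA1Artanh (x : ℝ) : zagierA x = zagierA1Artanh x := by
  rw [zagierA, intervalIntegral.integral_eq_sub_of_hasDerivAt
    (fun t _ => hasDerivAt_zagierA1Artanh t)
    (continuous_one_div_one_add_sq_mul_log.intervalIntegrable 0 x)]
  simp [zagierA1Artanh]

theorem zagierA1_eq_zagierA1Artanh {x : ℝ} (hx : 0 < x) : zagierA1 x = zagierA1Artanh x := by
  rw [zagierA1Artanh, intervalIntegral.integral_of_le zero_le_one, integral_Ioc_eq_integral_Ioo,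
    integral_Ioo_zero_one_eq_integral_Ioi_tanh, zagierA1, ← integral_const_mul]
  refine setIntegral_congr_fun measurableSet_Ioi fun t _ => ?_
  rw [artanh_tanh, tanh_eq_sinh_div_cosh]
  norm_num
  field_simp
  ring

/-- `A(x)` is well-defined for every real `x`, is odd, and agrees with `A₁(x)` for `x > 0`. -/
theorem zagierA_welldefined_odd_eq_A1 :
    (∀ x : ℝ, IntervalIntegrable
        (fun t : ℝ => (1 / (1 + t ^ 2)) * Real.log (4 / (1 + t ^ 2))) volume 0 x) ∧
    (∀ x : ℝ, zagierA (-x) = -zagierA x) ∧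
    (∀ x : ℝ, 0 < x → zagierA x = zagierA1 x) := by
  refine ⟨fun x => continuous_one_div_one_add_sq_mul_log.intervalIntegrable 0 x,
    fun x => ?_, fun x hx => ?_⟩
  · simp only [zagierA_eq_zagierA1Artanh, zagierA1Artanh_neg]
  · rw [zagierA_eq_zagierA1Artanh, zagierA1_eq_zagierA1Artanh hx]
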